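/- arXiv:1503.08942 — 2 statements merged into one kernel-verified Lean document; each statement's English description precedes it below -/
import Mathlib

section
/- Let β∖γ be a rook strip and let X, Z be LR-fillings of type (α, β, γ) with Z <_dom X. Then there exists an LR-filling Y of the same type such that Z ≤_dom Y and Y is obtained from X by a single decreasing box move. Consequently Z ≤_dom X implies Z ≤_box X. -/
open Equiv

/-! ### Permutations: adjacent transpositions, Coxeter length, Bruhat order -/

/-- `s` is an adjacent transposition `(i, i+1)` in `S_n` (values `0`-indexed). -/
def IsAdjTrans {n : ℕ} (s : Perm (Fin n)) : Prop :=
  ∃ (i : ℕ) (h : i + 1 < n), s = Equiv.swap ⟨i, Nat.lt_of_succ_lt h⟩ ⟨i + 1, h⟩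

/-- Coxeter length: the minimal number of adjacent transpositions in a factorization. -/
noncomputable def permLength {n : ℕ} (x : Perm (Fin n)) : ℕ :=
  sInf {k | ∃ l : List (Perm (Fin n)), l.length = k ∧ (∀ s ∈ l, IsAdjTrans s) ∧ l.prod = x}

/-- Strict Bruhat order: generated by `u < t * u` for transpositions `t`
increasing the length. -/
def BruhatLT {n : ℕ} (x z : Perm (Fin n)) : Prop :=
  Relation.TransGen
    (fun u v => ∃ t : Perm (Fin n), t.IsSwap ∧ v = t * u ∧ permLength u < permLength v) x z

/-- Bruhat order (reflexive version). -/
def BruhatLE {n : ℕ} (x z : Perm (Fin n)) : Prop := x = z ∨ BruhatLT x z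

/-! ### Partitions -/

/-- A partition: an antitone, finitely supported function `ℕ → ℕ`
(the part `αᵢ` of the paper is `f (i-1)`; rows are `0`-indexed). -/
structure Partn where
  f : ℕ → ℕ
  antitone' : Antitone f
  finite_supp : ∃ N, ∀ i, N ≤ i → f i = 0

/-- `p` is a partition of `n`. -/
def PartnOf (p : Partn) (n : ℕ) : Prop :=
  ∃ N, (∀ i, N ≤ i → p.f i = 0) ∧ ∑ i ∈ Finset.range N, p.f i = n

/-- The partial sum `α₁ + ⋯ + α_j` of the first `j` parts. -/
def psum (p : Partn) (j : ℕ) : ℕ := ∑ i ∈ Finset.range j, p.f i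

/-- The set of block boundaries `α₁, α₁+α₂, …` (`1`-indexed positions). -/
def Bdry (p : Partn) : Set ℕ := {m | ∃ j, 1 ≤ j ∧ m = psum p j}

/-- `S^α`: permutations whose values within each block of `α` occur in increasing
order of position.  Values are `0`-indexed: value `v` is the paper's value `v+1`,
and `v`, `v+1` lie in the same block iff `v+1 ∉ Bdry α`. -/
def SAset (α : Partn) {n : ℕ} (x : Perm (Fin n)) : Prop :=
  ∀ (v : ℕ) (h : v + 1 < n), (v + 1) ∉ Bdry α →
    x⁻¹ ⟨v, Nat.lt_of_succ_lt h⟩ < x⁻¹ ⟨v + 1, h⟩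

/-- Containment of partitions. -/
def PartnSub (γ β : Partn) : Prop := ∀ i, γ.f i ≤ β.f i

/-- The transpose (conjugate) partition: `β'_j = #{i : βᵢ ≥ j}` (columns `0`-indexed). -/
noncomputable def ptranspose (p : Partn) (j : ℕ) : ℕ := Set.ncard {i | j < p.f i}

/-- `β∖γ` is a vertical strip: `βᵢ ≤ γᵢ + 1` for all `i`. -/
def VertStrip (β γ : Partn) : Prop := ∀ i, β.f i ≤ γ.f i + 1

/-- `β∖γ` is a horizontal strip: `β'∖γ'` is a vertical strip. -/
def HorizStrip (β γ : Partn) : Prop := ∀ j, ptranspose β j ≤ ptranspose γ j + 1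

/-- A rook strip is a horizontal and vertical strip. -/
def RookStrip (β γ : Partn) : Prop := VertStrip β γ ∧ HorizStrip β γ

/-- The boxes of the skew diagram `β∖γ` (row, column), `0`-indexed. -/
def SkewCells (β γ : Partn) : Set (ℕ × ℕ) := {c | γ.f c.1 ≤ c.2 ∧ c.2 < β.f c.1}

/-! ### Fillings of skew diagrams -/

/-- A filling of the skew diagram `β∖γ` with content `α`: each box gets an entry
`≥ 1`, and there are `α_u` entries equal to `u` (the paper's `αᵤ` is `α.f (u-1)`). -/
structure SkFilling (α β γ : Partn) where
  entry : ℕ × ℕ → ℕ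
  zero_outside : ∀ c, c ∉ SkewCells β γ → entry c = 0
  pos_inside : ∀ c ∈ SkewCells β γ, 1 ≤ entry c
  content : ∀ u : ℕ, 1 ≤ u → Set.ncard {c ∈ SkewCells β γ | entry c = u} = α.f (u - 1)

/-- The Littlewood–Richardson conditions: rows weakly increase, columns strictly
increase, and the lattice permutation property holds. -/
def IsLRF {α β γ : Partn} (F : SkFilling α β γ) : Prop :=
  (∀ i j j' : ℕ, (i, j) ∈ SkewCells β γ → (i, j') ∈ SkewCells β γ → j ≤ j' →
      F.entry (i, j) ≤ F.entry (i, j')) ∧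
  (∀ i i' j : ℕ, (i, j) ∈ SkewCells β γ → (i', j) ∈ SkewCells β γ → i < i' →
      F.entry (i, j) < F.entry (i', j)) ∧
  (∀ u c : ℕ, 2 ≤ u →
      Set.ncard {p ∈ SkewCells β γ | c ≤ p.2 ∧ F.entry p = u} ≤
      Set.ncard {p ∈ SkewCells β γ | c ≤ p.2 ∧ F.entry p = u - 1})

/-- Row `i` of the partition `γ⁽ᵘ⁾`: the boxes of `γ` together with the boxes of
`β∖γ` whose entry is at most `u`. -/
noncomputable def regionRow {α β γ : Partn} (F : SkFilling α β γ) (u i : ℕ) : ℕ :=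
  γ.f i + Set.ncard {j | (i, j) ∈ SkewCells β γ ∧ F.entry (i, j) ≤ u}

/-- Dominance order on fillings: `Z ≤_dom X` iff `δ⁽ᵘ⁾ ≤_dom γ⁽ᵘ⁾` for every `u`. -/
def DomLE {α β γ : Partn} (Z X : SkFilling α β γ) : Prop :=
  ∀ u j : ℕ, ∑ i ∈ Finset.range j, regionRow Z u i ≤ ∑ i ∈ Finset.range j, regionRow X u i

/-- A single sorting swap: exchange two out-of-order entries within a row
(left entry bigger) or within a column (upper entry bigger). -/
def SortSwap (β γ : Partn) (W Z : ℕ × ℕ → ℕ) : Prop :=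
  ∃ p q : ℕ × ℕ, p ∈ SkewCells β γ ∧ q ∈ SkewCells β γ ∧
    ((p.1 = q.1 ∧ p.2 < q.2) ∨ (p.2 = q.2 ∧ p.1 < q.1)) ∧
    W q < W p ∧
    Z = Function.update (Function.update W p (W q)) q (W p)

/-- `Z` is obtained from `X` by a decreasing box move: two entries of `X` are
exchanged so that the smaller entry is in the lower position after the exchange,
and then rows and columns are re-sorted if necessary. -/
def BoxMove {α β γ : Partn} (X Z : SkFilling α β γ) : Prop :=
  ∃ p q : ℕ × ℕ, p ∈ SkewCells β γ ∧ q ∈ SkewCells β γ ∧ p.1 < q.1 ∧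
    X.entry p < X.entry q ∧
    Relation.ReflTransGen (SortSwap β γ)
      (Function.update (Function.update X.entry p (X.entry q)) q (X.entry p)) Z.entry

/-- The box order on LR-fillings: generated by decreasing box moves. -/
def LeBox {α β γ : Partn} (Z X : SkFilling α β γ) : Prop :=
  Relation.ReflTransGen (fun Y W => IsLRF Y ∧ IsLRF W ∧ BoxMove W Y) Z X

/-! ### Reading words and standardization -/

/-- The block (paper entry, `1`-indexed) containing the `0`-indexed value `v`. -/
noncomputable def blockIdx (α : Partn) (v : ℕ) : ℕ := sInf {u | v < psum α u}

/-- `e` enumerates the boxes of the rook strip `β∖γ` from top right to bottom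
left, i.e. in increasing order of rows. -/
def IsRowRead (β γ : Partn) {n : ℕ} (e : Fin n → ℕ × ℕ) : Prop :=
  (∀ k, e k ∈ SkewCells β γ) ∧ Function.Injective e ∧
  (∀ c ∈ SkewCells β γ, ∃ k, e k = c) ∧
  ∀ k l : Fin n, k < l → (e k).1 < (e l).1

/-- `e` enumerates the boxes of `β∖γ` column by column from left to right, each
column read from bottom to top (the reading order of the word `ω`). -/
def IsColRead (β γ : Partn) {n : ℕ} (e : Fin n → ℕ × ℕ) : Prop :=
  (∀ k, e k ∈ SkewCells β γ) ∧ Function.Injective e ∧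
  (∀ c ∈ SkewCells β γ, ∃ k, e k = c) ∧
  ∀ k l : Fin n, k < l →
    (e k).2 < (e l).2 ∨ ((e k).2 = (e l).2 ∧ (e l).1 < (e k).1)

/-- `p` is the standardization `π(F)` of the reading word of the filling `F`
with respect to the reading enumeration `e`: position `k` receives a value in the
block corresponding to the entry of the `k`-th box, and equal entries receive
their values in reading order. -/
def IsStdOf (α : Partn) {β γ : Partn} {n : ℕ} (F : SkFilling α β γ)
    (e : Fin n → ℕ × ℕ) (p : Perm (Fin n)) : Prop :=
  (∀ k : Fin n, blockIdx α (p k) = F.entry (e k)) ∧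
  ∀ k l : Fin n, k < l → F.entry (e k) = F.entry (e l) → p k < p l

/-- The `α`-recording tableau of `x` is standard: the entries `x⁻¹(psum α u + j)`
increase along rows and down columns of the shape `α` (rows `0`-indexed). -/
def RecStd (α : Partn) {n : ℕ} (x : Perm (Fin n)) : Prop :=
  (∀ u j j' : ℕ, j < j' → j' < α.f u →
    ∀ (h : psum α u + j < n) (h' : psum α u + j' < n),
      x⁻¹ ⟨psum α u + j, h⟩ < x⁻¹ ⟨psum α u + j', h'⟩) ∧
  (∀ u u' j : ℕ, u < u' → j < α.f u' →
    ∀ (h : psum α u + j < n) (h' : psum α u' + j < n),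
      x⁻¹ ⟨psum α u + j, h⟩ < x⁻¹ ⟨psum α u' + j, h'⟩)

/-- Covering relation of the box order on LR-fillings. -/
def CovBox {α β γ : Partn} (X Y : SkFilling α β γ) : Prop :=
  IsLRF X ∧ IsLRF Y ∧ LeBox X Y ∧ X ≠ Y ∧
    ∀ W, IsLRF W → LeBox X W → LeBox W Y → W = X ∨ W = Y

/-- The decreasing block `(i, i-1, …, 1)`. -/
def descBlock (i : ℕ) : List ℕ := ((List.range i).reverse).map (· + 1)

/-!
In a rook strip every row and every column holds at most one box, so an LR-filling is just its
row word: the entries read from top to bottom. The row and column conditions become vacuous,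
the lattice condition becomes the lattice property of the word (column thresholds cut the strip
into row prefixes), and `≤_dom` becomes prefix dominance of the words.

Given lattice words `z <_dom x` of equal content, let `i₀` be the first position where they
differ; dominance forces `x i₀ < c := z i₀`, and the content forces a first later position `Q`
with `x Q = c`. Let `P` carry a largest letter `d < c` of `x` in the window `[i₀, Q)`; no letter
of `(d, c]` occurs there. Exchanging the letters at `P` and `Q` is a decreasing box move. It keeps
the lattice property (the lattice property of `z` at `i₀` leaves room for the extra `c`) and
stays above `z`, since in the rectangle `d ≤ u < c`, `i₀ < j ≤ Q` dominance is strict. Each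
move lowers `∑ i * x i`, so iterating reaches `z`.
-/

open Finset

def prefixCount (w : ℕ → ℕ) (s : Finset ℕ) (j : ℕ) : ℕ := #{i ∈ range j | w i ∈ s}

section PrefixCount

variable (w : ℕ → ℕ) (s : Finset ℕ)

lemma prefixCount_succ (j : ℕ) :
    prefixCount w s (j + 1) = prefixCount w s j + if w j ∈ s then 1 else 0 := by
  simp only [prefixCount, range_add_one, filter_insert]
  split_ifs <;> simp [card_insert_of_notMem]

lemma prefixCount_mono : Monotone (prefixCount w s) := fun _ _ h =>
  card_le_card (filter_subset_filter _ (range_subset_range.2 h))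

lemma prefixCount_lt_of_mem {i j : ℕ} (hi : w i ∈ s) (hij : i < j) :
    prefixCount w s i < prefixCount w s j := by
  calc prefixCount w s i < prefixCount w s (i + 1) := by simp [prefixCount_succ, hi]
    _ ≤ prefixCount w s j := prefixCount_mono w s hij

lemma prefixCount_union {t : Finset ℕ} (hst : Disjoint s t) (j : ℕ) :
    prefixCount w (s ∪ t) j = prefixCount w s j + prefixCount w t j := by
  simp only [prefixCount, mem_union, filter_or]
  exact card_union_of_disjoint (disjoint_filter_filter' _ _ (by
    intro p h1 h2 i hi; exact (disjoint_left.1 hst) (h1 i hi) (h2 i hi)))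

lemma prefixCount_congr {w' : ℕ → ℕ} {j : ℕ} (h : ∀ i < j, w i = w' i) :
    prefixCount w s j = prefixCount w' s j := by
  unfold prefixCount
  congr 1
  exact filter_congr fun i hi => by rw [h i (mem_range.1 hi)]

lemma prefixCount_eq_of_notMem {j j' : ℕ} (hjj' : j ≤ j')
    (h : ∀ i, j ≤ i → i < j' → w i ∉ s) : prefixCount w s j' = prefixCount w s j := by
  induction j', hjj' using Nat.le_induction with
  | base => rfl
  | succ j' hjj' ih =>
    rw [prefixCount_succ, if_neg (h j' hjj' j'.lt_succ_self),
      ih fun i hi hij => h i hi (by omega), add_zero]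

lemma ncard_setOf_lt_mem (j : ℕ) : {i | i < j ∧ w i ∈ s}.ncard = prefixCount w s j := by
  rw [prefixCount, ← Set.ncard_coe_finset]
  congr 1
  ext i
  simp

lemma prefixCount_comp_swap {P Q : ℕ} (hPQ : P < Q) (j : ℕ) :
    prefixCount (w ∘ swap P Q) s j + (if P < j ∧ j ≤ Q ∧ w P ∈ s then 1 else 0) =
      prefixCount w s j + (if P < j ∧ j ≤ Q ∧ w Q ∈ s then 1 else 0) := by
  induction j with
  | zero => simp [prefixCount]
  | succ j ih =>
    rw [prefixCount_succ, prefixCount_succ, Function.comp_apply]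
    have hswap : swap P Q j = if j = P then Q else if j = Q then P else j :=
      swap_apply_def P Q j
    by_cases hP : w P ∈ s <;> by_cases hQ : w Q ∈ s <;>
      simp only [hP, hQ, and_true, and_false, hswap] at ih ⊢ <;>
      split_ifs at ih ⊢ <;> simp_all <;> omega

end PrefixCount

def IsLatticeWord (w : ℕ → ℕ) : Prop :=
  ∀ v j, 2 ≤ v → prefixCount w {v} j ≤ prefixCount w {v - 1} j

-- The letter `0` stands for an empty row of the strip and is not counted.
def WordDomLE (z x : ℕ → ℕ) : Prop :=
  ∀ u j, prefixCount z (Ioc 0 u) j ≤ prefixCount x (Ioc 0 u) j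

lemma WordDomLE.comp_swap {z x : ℕ → ℕ} (hdom : WordDomLE z x) {P Q : ℕ} (hPQ : P < Q)
    (hPQx : x P < x Q)
    (hrect : ∀ u j, x P ≤ u → u < x Q → P < j → j ≤ Q →
      prefixCount z (Ioc 0 u) j < prefixCount x (Ioc 0 u) j) :
    WordDomLE z (x ∘ swap P Q) := by
  intro u j
  have hswap := prefixCount_comp_swap x (Ioc 0 u) hPQ j
  have := hdom u j
  simp only [mem_Ioc] at hswap
  by_cases hwin : x P ≤ u ∧ u < x Q ∧ P < j ∧ j ≤ Q
  · have := hrect u j hwin.1 hwin.2.1 hwin.2.2.1 hwin.2.2.2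
    split_ifs at hswap <;> omega
  · split_ifs at hswap <;> omega

lemma IsLatticeWord.comp_swap {x : ℕ → ℕ} (hx : IsLatticeWord x) {P Q : ℕ} (hPQ : P < Q)
    (hPQx : x P < x Q)
    (hgap : ∀ i, P < i → i < Q → x i ∉ Ioc (x P) (x Q))
    (hc : prefixCount x {x Q} P < prefixCount x {x Q - 1} P) :
    IsLatticeWord (x ∘ swap P Q) := by
  intro v j hv
  have hswap : ∀ v,
      prefixCount (x ∘ swap P Q) {v} j + (if P < j ∧ j ≤ Q ∧ x P = v then 1 else 0) =
        prefixCount x {v} j + (if P < j ∧ j ≤ Q ∧ x Q = v then 1 else 0) := fun v => by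
    simpa only [mem_singleton] using prefixCount_comp_swap x {v} hPQ j
  have hv₁ := hswap v
  have hv₂ := hswap (v - 1)
  by_cases hj : P < j ∧ j ≤ Q
  swap
  · have := hx v j hv
    split_ifs at hv₁ hv₂ <;> omega
  have hstable : ∀ v, x P < v → v ≤ x Q → prefixCount x {v} j = prefixCount x {v} P :=
    fun v h₁ h₂ => prefixCount_eq_of_notMem x {v} hj.1.le fun i hPi hij hi => by
      rcases hPi.eq_or_lt with rfl | hPi
      · rw [mem_singleton] at hi
        omega
      · exact hgap i hPi (by omega) (by rw [mem_singleton.1 hi]; exact mem_Ioc.2 ⟨h₁, h₂⟩)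
  have hd := prefixCount_lt_of_mem x {x P} (mem_singleton_self _) hj.1
  simp only [hj, true_and] at hv₁ hv₂
  by_cases hvc : v = x Q
  · subst hvc
    have := hstable (x Q) hPQx le_rfl
    have := prefixCount_mono x {x Q - 1} hj.1.le
    rcases eq_or_ne (x P) (x Q - 1) with hdc | hdc
    · rw [hdc] at hd
      split_ifs at hv₁ hv₂ <;> omega
    · split_ifs at hv₁ hv₂ <;> omega
  by_cases hvd : v = x P + 1
  · subst hvd
    have := hstable (x P + 1) (by omega) (by omega)
    have := hx (x P + 1) P (by omega)
    simp only [Nat.add_sub_cancel] at hv₂ this ⊢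
    split_ifs at hv₁ hv₂ <;> omega
  · have := hx v j hv
    split_ifs at hv₁ hv₂ <;> omega

section Exchange

variable {x z : ℕ → ℕ}

lemma exists_first_lt_of_wordDomLE (hzero : ∀ i, x i = 0 ↔ z i = 0) (hdom : WordDomLE z x)
    (hne : x ≠ z) : ∃ i₀, (∀ i < i₀, x i = z i) ∧ 0 < x i₀ ∧ x i₀ < z i₀ := by
  obtain ⟨i₀, hi₀, hagree⟩ : ∃ i₀, x i₀ ≠ z i₀ ∧ ∀ i < i₀, x i = z i := by
    have hex : ∃ i, x i ≠ z i := Function.ne_iff.1 hne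
    exact ⟨Nat.find hex, Nat.find_spec hex, fun i hi => not_not.1 (Nat.find_min hex hi)⟩
  refine ⟨i₀, hagree, ?_⟩
  have hx₀ : x i₀ ≠ 0 := fun h => hi₀ (h.trans ((hzero i₀).1 h).symm)
  have hz₀ : z i₀ ≠ 0 := fun h => hi₀ (((hzero i₀).2 h).trans h.symm)
  refine ⟨Nat.pos_of_ne_zero hx₀, lt_of_le_of_ne (not_lt.1 fun hlt => ?_) hi₀⟩
  have := hdom (z i₀) (i₀ + 1)
  rw [prefixCount_succ, prefixCount_succ, prefixCount_congr x _ hagree] at this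
  simp only [mem_Ioc] at this
  split_ifs at this <;> omega

lemma exists_lt_eq_of_content {N i₀ : ℕ}
    (hcont : ∀ v j, 0 < v → N ≤ j → prefixCount x {v} j = prefixCount z {v} j)
    (hagree : ∀ i < i₀, x i = z i) (hz : 0 < z i₀) (hne : x i₀ ≠ z i₀) :
    ∃ Q, i₀ < Q ∧ x Q = z i₀ := by
  by_contra! hQ
  have hx : prefixCount x {z i₀} (max N (i₀ + 1)) = prefixCount x {z i₀} i₀ :=
    prefixCount_eq_of_notMem x _ (by omega) fun i hi _ hxi => by
      rcases hi.eq_or_lt with rfl | hi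
      · exact hne (mem_singleton.1 hxi)
      · exact hQ i hi (mem_singleton.1 hxi)
  have hlt := prefixCount_lt_of_mem z {z i₀} (mem_singleton_self _)
    (show i₀ < max N (i₀ + 1) by omega)
  have := hcont (z i₀) (max N (i₀ + 1)) hz (le_max_left _ _)
  rw [prefixCount_congr x _ hagree] at hx
  omega

lemma prefixCount_lt_of_wordDomLE (hdom : WordDomLE z x) {i₀ Q d u j : ℕ}
    (hagree : ∀ i < i₀, x i = z i)
    (hgap : ∀ i, i₀ ≤ i → i < Q → x i ∉ Ioc d (z i₀))
    (hdu : d ≤ u) (huc : u < z i₀) (hj : i₀ < j) (hjQ : j ≤ Q) :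
    prefixCount z (Ioc 0 u) j < prefixCount x (Ioc 0 u) j := by
  have hsplit : ∀ w, prefixCount w (Ioc 0 (z i₀)) j =
      prefixCount w (Ioc 0 u) j + prefixCount w (Ioc u (z i₀)) j := fun w => by
    rw [← prefixCount_union w _ (Ioc_disjoint_Ioc_of_le le_rfl),
      Ioc_union_Ioc_eq_Ioc (Nat.zero_le u) huc.le]
  have hx : prefixCount x (Ioc u (z i₀)) j = prefixCount z (Ioc u (z i₀)) i₀ := by
    rw [prefixCount_eq_of_notMem x _ hj.le fun i h₁ h₂ hi =>
      hgap i h₁ (by omega) (Ioc_subset_Ioc_left hdu hi), prefixCount_congr x _ hagree]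
  have hz := prefixCount_lt_of_mem z (Ioc u (z i₀)) (mem_Ioc.2 ⟨huc, le_rfl⟩) hj
  have := hdom (z i₀) j
  rw [hsplit, hsplit] at this
  omega

lemma prefixCount_lt_of_isLatticeWord (hz : IsLatticeWord z) {i₀ P : ℕ}
    (hagree : ∀ i < i₀, x i = z i) (h2 : 2 ≤ z i₀) (hi₀P : i₀ ≤ P)
    (hgap : ∀ i, i₀ ≤ i → i < P → x i ≠ z i₀) :
    prefixCount x {z i₀} P < prefixCount x {z i₀ - 1} P := by
  have hc : prefixCount x {z i₀} P = prefixCount z {z i₀} i₀ := by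
    rw [prefixCount_eq_of_notMem x _ hi₀P fun i h₁ h₂ hi =>
      hgap i h₁ h₂ (mem_singleton.1 hi), prefixCount_congr x _ hagree]
  have hc' : prefixCount z {z i₀ - 1} i₀ ≤ prefixCount x {z i₀ - 1} P := by
    rw [← prefixCount_congr x _ hagree]
    exact prefixCount_mono x _ hi₀P
  have := hz (z i₀) (i₀ + 1) h2
  rw [prefixCount_succ, prefixCount_succ, if_pos (mem_singleton_self _),
    if_neg (by rw [mem_singleton]; omega)] at this
  omega

theorem exists_swap_isLatticeWord_wordDomLE {N : ℕ} (hx : IsLatticeWord x)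
    (hz : IsLatticeWord z) (hzero : ∀ i, x i = 0 ↔ z i = 0)
    (hcont : ∀ v j, 0 < v → N ≤ j → prefixCount x {v} j = prefixCount z {v} j)
    (hdom : WordDomLE z x) (hne : x ≠ z) :
    ∃ P Q, P < Q ∧ 0 < x P ∧ x P < x Q ∧
      IsLatticeWord (x ∘ swap P Q) ∧ WordDomLE z (x ∘ swap P Q) := by
  obtain ⟨i₀, hagree, hpos, hlt⟩ := exists_first_lt_of_wordDomLE hzero hdom hne
  have hQ : ∃ Q, i₀ < Q ∧ x Q = z i₀ :=
    exists_lt_eq_of_content hcont hagree (by omega) hlt.ne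
  obtain ⟨hi₀Q, hxQ⟩ := Nat.find_spec hQ
  set Q := Nat.find hQ
  obtain ⟨P, hPW, hPmax⟩ := exists_max_image {i ∈ Ico i₀ Q | x i < z i₀} x
    ⟨i₀, by simp [hi₀Q, hlt]⟩
  simp only [mem_filter, mem_Ico] at hPW hPmax
  obtain ⟨⟨hi₀P, hPQ⟩, hPc⟩ := hPW
  have hwin : ∀ i, i₀ ≤ i → i < Q → x i ∉ Ioc (x P) (z i₀) := fun i h₁ h₂ hi => by
    rw [mem_Ioc] at hi
    rcases hi.2.lt_or_eq with hlt' | heq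
    · exact absurd (hPmax i ⟨⟨h₁, h₂⟩, hlt'⟩) (not_le.2 hi.1)
    · rcases h₁.eq_or_lt with rfl | h₁
      · omega
      · exact Nat.find_min hQ h₂ ⟨h₁, heq⟩
  have hxP : 0 < x P := hpos.trans_le (hPmax i₀ ⟨⟨le_rfl, hi₀Q⟩, hlt⟩)
  refine ⟨P, Q, hPQ, hxP, hxQ ▸ hPc, ?_, ?_⟩
  · refine hx.comp_swap hPQ (hxQ ▸ hPc) (fun i h₁ h₂ => hxQ ▸ hwin i (by omega) h₂) ?_
    rw [hxQ]
    exact prefixCount_lt_of_isLatticeWord hz hagree (by omega) hi₀P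
      fun i h₁ h₂ h => hwin i h₁ (by omega) (by simp [h, hPc])
  · exact hdom.comp_swap hPQ (hxQ ▸ hPc) fun u j h₁ h₂ h₃ h₄ =>
      prefixCount_lt_of_wordDomLE hdom hagree hwin h₁ (hxQ ▸ h₂) (by omega) h₄

end Exchange

lemma sum_mul_comp_swap_lt {x : ℕ → ℕ} {P Q N : ℕ} (hPQ : P < Q) (hQN : Q < N)
    (hx : x P < x Q) :
    ∑ i ∈ range N, i * (x ∘ swap P Q) i < ∑ i ∈ range N, i * x i := by
  have hP : P ∈ range N := mem_range.2 (hPQ.trans hQN)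
  have hQ : Q ∈ (range N).erase P := mem_erase.2 ⟨hPQ.ne', mem_range.2 hQN⟩
  rw [← add_sum_erase _ _ hP, ← add_sum_erase _ _ hQ, ← add_sum_erase _ _ hP,
    ← add_sum_erase _ _ hQ, Function.comp_apply, Function.comp_apply, swap_apply_left,
    swap_apply_right, ← add_assoc, ← add_assoc]
  have hrest : ∑ i ∈ ((range N).erase P).erase Q, i * (x ∘ swap P Q) i =
      ∑ i ∈ ((range N).erase P).erase Q, i * x i := sum_congr rfl fun i hi => by
    obtain ⟨hiQ, hiP, -⟩ : i ≠ Q ∧ i ≠ P ∧ _ := by simpa using hi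
    rw [Function.comp_apply, swap_apply_of_ne_of_ne hiP hiQ]
  rw [hrest, add_lt_add_iff_right]
  obtain ⟨a, rfl⟩ := Nat.exists_eq_add_of_lt hPQ
  obtain ⟨b, hb⟩ := Nat.exists_eq_add_of_lt hx
  rw [hb]
  nlinarith

section Strips

variable {α β γ : Partn}

lemma VertStrip.mem_skewCells_iff (hv : VertStrip β γ) {i j : ℕ} :
    (i, j) ∈ SkewCells β γ ↔ γ.f i < β.f i ∧ j = γ.f i := by
  have := hv i
  change γ.f i ≤ j ∧ j < β.f i ↔ _
  omega

lemma exists_forall_ge_f_le_f (β γ : Partn) : ∃ N, ∀ i, N ≤ i → β.f i ≤ γ.f i := by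
  obtain ⟨N, hN⟩ := β.finite_supp
  exact ⟨N, fun i hi => (hN i hi).trans_le (Nat.zero_le _)⟩

lemma HorizStrip.strictAntiOn (hh : HorizStrip β γ) :
    StrictAntiOn γ.f {i | γ.f i < β.f i} := by
  intro i (hi : γ.f i < β.f i) i' (hi' : γ.f i' < β.f i') hii'
  refine (γ.antitone' hii'.le).lt_of_ne fun heq => ?_
  have hγ : {k | γ.f i' < γ.f k} ⊆ {k | γ.f i' < β.f k} := by
    intro k (hk : γ.f i' < γ.f k)
    have hki : k < i := by
      by_contra! h
      exact (γ.antitone' h).not_gt (heq ▸ hk)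
    exact (heq ▸ hi).trans_le (β.antitone' hki.le)
  have hfin : {k | γ.f i' < β.f k}.Finite := by
    obtain ⟨N, hN⟩ := β.finite_supp
    refine (Set.finite_lt_nat N).subset fun k (hk : γ.f i' < β.f k) => show k < N from ?_
    by_contra! h
    rw [hN k h] at hk
    omega
  have hdisj : Disjoint {k | γ.f i' < γ.f k} {i, i'} :=
    Set.disjoint_left.2 fun k (hk : γ.f i' < γ.f k) hk' => by
      rcases hk' with rfl | rfl <;> omega
  have hsub : {k | γ.f i' < γ.f k} ∪ {i, i'} ⊆ {k | γ.f i' < β.f k} := by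
    rintro k (hk | rfl | rfl)
    exacts [hγ hk, heq ▸ hi, hi']
  have := Set.ncard_le_ncard hsub hfin
  rw [Set.ncard_union_eq hdisj (hfin.subset hγ) (Set.toFinite _), Set.ncard_pair hii'.ne] at this
  have := hh (γ.f i')
  simp only [ptranspose] at this
  omega

lemma exists_rowPrefix_eq_colThreshold (cc : ℕ) :
    ∃ j, ∀ i, γ.f i < β.f i → (cc ≤ γ.f i ↔ i < j) := by
  classical
  obtain ⟨N, hN⟩ := exists_forall_ge_f_le_f β γ
  have hex : ∃ m, ∀ i, m ≤ i → γ.f i < β.f i → γ.f i < cc :=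
    ⟨N, fun i hi hrow => absurd (hN i hi) (not_le.2 hrow)⟩
  refine ⟨Nat.find hex, fun i hrow => ⟨fun hcc => ?_, fun hi => ?_⟩⟩
  · by_contra! h
    exact (Nat.find_spec hex i h hrow).not_ge hcc
  · by_contra! h
    exact Nat.find_min hex hi fun i' hi' _ => (γ.antitone' hi').trans_lt h

lemma HorizStrip.exists_colThreshold_eq_rowPrefix (hh : HorizStrip β γ) (j : ℕ) :
    ∃ cc, ∀ i, γ.f i < β.f i → (cc ≤ γ.f i ↔ i < j) := by
  classical
  have hex : ∃ cc, ∀ i, j ≤ i → γ.f i < β.f i → γ.f i < cc :=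
    ⟨γ.f 0 + 1, fun i _ _ => Nat.lt_succ_of_le (γ.antitone' (Nat.zero_le i))⟩
  refine ⟨Nat.find hex, fun i hrow => ⟨fun hcc => ?_, fun hi => ?_⟩⟩
  · by_contra! h
    exact (Nat.find_spec hex i h hrow).not_ge hcc
  · by_contra! h
    obtain ⟨i', hji', hrow', hi'⟩ :
        ∃ i', j ≤ i' ∧ γ.f i' < β.f i' ∧ γ.f i ≤ γ.f i' := by
      have := Nat.find_min hex (show Nat.find hex - 1 < Nat.find hex by omega)
      push Not at this
      obtain ⟨i', h₁, h₂, h₃⟩ := this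
      exact ⟨i', h₁, h₂, by omega⟩
    exact (hh.strictAntiOn hrow hrow' (hi.trans_le hji')).not_ge hi'

end Strips

lemma swap_apply_mem_iff {ι : Type*} [DecidableEq ι] {s : Set ι} {a b : ι} (ha : a ∈ s)
    (hb : b ∈ s) (c : ι) : swap a b c ∈ s ↔ c ∈ s := by
  have h := (swap_bijOn_self (iff_of_true ha hb)).mapsTo
  exact ⟨fun hc => by simpa using h hc, fun hc => h hc⟩

namespace SkFilling

variable {α β γ : Partn}

def rowWord (F : SkFilling α β γ) (i : ℕ) : ℕ := F.entry (i, γ.f i)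

lemma rowWord_pos_iff (F : SkFilling α β γ) (i : ℕ) : 0 < F.rowWord i ↔ γ.f i < β.f i := by
  refine ⟨fun h => not_le.1 fun hle => h.ne' (F.zero_outside _ fun hc => ?_),
    fun h => F.pos_inside _ ⟨le_rfl, h⟩⟩
  exact (hc.2.trans_le hle).false

lemma rowWord_injective (hv : VertStrip β γ) :
    Function.Injective (rowWord : SkFilling α β γ → ℕ → ℕ) := by
  intro X Z h
  have : X.entry = Z.entry := funext fun ⟨i, j⟩ => by
    by_cases hc : (i, j) ∈ SkewCells β γ
    · obtain ⟨-, rfl⟩ := hv.mem_skewCells_iff.1 hc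
      exact congrFun h i
    · rw [X.zero_outside _ hc, Z.zero_outside _ hc]
  cases X
  cases Z
  congr

lemma ncard_filter_skewCells (hv : VertStrip β γ) (F : SkFilling α β γ)
    (φ : ℕ × ℕ → Prop) (hφ : ∀ p, φ p → 0 < F.entry p) :
    {p ∈ SkewCells β γ | φ p}.ncard = {i | φ (i, γ.f i)}.ncard := by
  have : {p ∈ SkewCells β γ | φ p} = (fun i => (i, γ.f i)) '' {i | φ (i, γ.f i)} := by
    ext ⟨i, j⟩
    constructor
    · rintro ⟨hc, hφi⟩
      obtain ⟨-, rfl⟩ := hv.mem_skewCells_iff.1 hc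
      exact ⟨i, hφi, rfl⟩
    · rintro ⟨i, hφi, h⟩
      cases h
      exact ⟨⟨le_rfl, (F.rowWord_pos_iff i).1 (hφ _ hφi)⟩, hφi⟩
  rw [this, Set.ncard_image_of_injective _ fun a b h => congrArg Prod.fst h]

lemma prefixCount_rowWord_eq_content (hv : VertStrip β γ) (F : SkFilling α β γ) {N : ℕ}
    (hN : ∀ i, N ≤ i → β.f i ≤ γ.f i) {v : ℕ} (hv0 : 0 < v) :
    prefixCount F.rowWord {v} N = α.f (v - 1) := by
  rw [← F.content v hv0, ncard_filter_skewCells hv F (F.entry · = v) fun p hp => hp ▸ hv0,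
    ← ncard_setOf_lt_mem]
  congr 1
  ext i
  refine ⟨fun h => mem_singleton.1 h.2, fun h => ⟨not_le.1 fun hi => ?_, mem_singleton.2 h⟩⟩
  exact (hN i hi).not_gt ((F.rowWord_pos_iff i).1 (show 0 < F.entry (i, γ.f i) from h ▸ hv0))

lemma regionRow_eq (hv : VertStrip β γ) (F : SkFilling α β γ) (u i : ℕ) :
    regionRow F u i = γ.f i + if F.rowWord i ∈ Ioc 0 u then 1 else 0 := by
  have : {j | (i, j) ∈ SkewCells β γ ∧ F.entry (i, j) ≤ u} =
      {j | j = γ.f i ∧ F.rowWord i ∈ Ioc 0 u} := by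
    ext j
    simp only [Set.mem_ofPred_eq, hv.mem_skewCells_iff, mem_Ioc, ← F.rowWord_pos_iff]
    constructor
    · rintro ⟨⟨hpos, rfl⟩, hu⟩
      exact ⟨rfl, hpos, hu⟩
    · rintro ⟨rfl, hpos, hu⟩
      exact ⟨⟨hpos, rfl⟩, hu⟩
  rw [regionRow, this]
  split_ifs with h <;> simp [h]

lemma sum_regionRow (hv : VertStrip β γ) (F : SkFilling α β γ) (u j : ℕ) :
    ∑ i ∈ range j, regionRow F u i =
      ∑ i ∈ range j, γ.f i + prefixCount F.rowWord (Ioc 0 u) j := by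
  simp only [regionRow_eq hv, sum_add_distrib, prefixCount, card_filter]

lemma domLE_iff (hv : VertStrip β γ) {Z X : SkFilling α β γ} :
    DomLE Z X ↔ WordDomLE Z.rowWord X.rowWord := by
  simp only [DomLE, WordDomLE, sum_regionRow hv, add_le_add_iff_left]

lemma ncard_colThreshold_eq_prefixCount (hv : VertStrip β γ) (F : SkFilling α β γ) {cc j : ℕ}
    (hcj : ∀ i, γ.f i < β.f i → (cc ≤ γ.f i ↔ i < j)) {v : ℕ} (hv0 : 0 < v) :
    {p ∈ SkewCells β γ | cc ≤ p.2 ∧ F.entry p = v}.ncard = prefixCount F.rowWord {v} j := by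
  rw [ncard_filter_skewCells hv F (fun p => cc ≤ p.2 ∧ F.entry p = v) fun p hp => hp.2 ▸ hv0,
    ← ncard_setOf_lt_mem]
  congr 1
  ext i
  have hrow : F.rowWord i = v → γ.f i < β.f i := fun h => (F.rowWord_pos_iff i).1 (h ▸ hv0)
  simp only [Set.mem_ofPred_eq, mem_singleton]
  exact ⟨fun ⟨hcc, h⟩ => ⟨(hcj i (hrow h)).1 hcc, h⟩,
    fun ⟨hij, h⟩ => ⟨(hcj i (hrow h)).2 hij, h⟩⟩

lemma isLRF_iff_isLatticeWord (hrook : RookStrip β γ) (F : SkFilling α β γ) :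
    IsLRF F ↔ IsLatticeWord F.rowWord := by
  obtain ⟨hv, hh⟩ := hrook
  constructor
  · rintro ⟨-, -, hlat⟩ v j hv2
    obtain ⟨cc, hcc⟩ := hh.exists_colThreshold_eq_rowPrefix j
    have := hlat v cc hv2
    rwa [ncard_colThreshold_eq_prefixCount hv F hcc (by omega),
      ncard_colThreshold_eq_prefixCount hv F hcc (by omega)] at this
  · refine fun hlat =>
      ⟨fun i j j' hj hj' _ => ?_, fun i i' j hj hj' hii' => ?_, fun u cc hu => ?_⟩
    · rw [(hv.mem_skewCells_iff.1 hj).2, (hv.mem_skewCells_iff.1 hj').2]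
    · obtain ⟨hi, rfl⟩ := hv.mem_skewCells_iff.1 hj
      obtain ⟨hi', heq⟩ := hv.mem_skewCells_iff.1 hj'
      exact absurd heq (hh.strictAntiOn hi hi' hii').ne'
    · obtain ⟨j, hj⟩ := exists_rowPrefix_eq_colThreshold (β := β) (γ := γ) cc
      rw [ncard_colThreshold_eq_prefixCount hv F hj (by omega),
        ncard_colThreshold_eq_prefixCount hv F hj (by omega)]
      exact hlat u j hu

def permute (F : SkFilling α β γ) (σ : Equiv.Perm (ℕ × ℕ))
    (hσ : ∀ c, σ c ∈ SkewCells β γ ↔ c ∈ SkewCells β γ) : SkFilling α β γ where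
  entry := F.entry ∘ σ
  zero_outside c hc := F.zero_outside _ ((hσ c).not.2 hc)
  pos_inside c hc := F.pos_inside _ ((hσ c).2 hc)
  content u hu := by
    rw [← F.content u hu, ← Set.ncard_preimage_of_injective_subset_range σ.injective
      (s := {c ∈ SkewCells β γ | F.entry c = u}) (by simp [σ.surjective.range_eq])]
    congr 1
    ext c
    simp [hσ]

lemma rowWord_permute_swap (F : SkFilling α β γ) {P Q : ℕ} (hPQ : P ≠ Q)
    (hσ : ∀ c, swap (P, γ.f P) (Q, γ.f Q) c ∈ SkewCells β γ ↔ c ∈ SkewCells β γ) :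
    (F.permute (swap (P, γ.f P) (Q, γ.f Q)) hσ).rowWord = F.rowWord ∘ swap P Q := by
  funext i
  simp only [rowWord, permute, Function.comp_apply, swap_apply_def, Prod.mk.injEq]
  split_ifs <;> simp_all

end SkFilling

section BoxOrder

variable {α β γ : Partn}

theorem exists_boxMove_of_domLE (hrook : RookStrip β γ) {X Z : SkFilling α β γ}
    (hX : IsLRF X) (hZ : IsLRF Z) (hdom : DomLE Z X) (hne : Z ≠ X) {N : ℕ}
    (hN : ∀ i, N ≤ i → β.f i ≤ γ.f i) :
    ∃ Y : SkFilling α β γ, IsLRF Y ∧ DomLE Z Y ∧ BoxMove X Y ∧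
      ∑ i ∈ range N, i * Y.rowWord i < ∑ i ∈ range N, i * X.rowWord i := by
  have hv := hrook.1
  obtain ⟨P, Q, hPQ, hP, hPQx, hlat, hdomY⟩ := exists_swap_isLatticeWord_wordDomLE (N := N)
    ((X.isLRF_iff_isLatticeWord hrook).1 hX) ((Z.isLRF_iff_isLatticeWord hrook).1 hZ)
    (fun i => by
      simpa only [Nat.pos_iff_ne_zero, not_iff_not] using
        (X.rowWord_pos_iff i).trans (Z.rowWord_pos_iff i).symm)
    (fun v j hv0 hNj => by
      rw [X.prefixCount_rowWord_eq_content hv (fun i hi => hN i (hNj.trans hi)) hv0,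
        Z.prefixCount_rowWord_eq_content hv (fun i hi => hN i (hNj.trans hi)) hv0])
    ((SkFilling.domLE_iff hv).1 hdom) fun h => hne (SkFilling.rowWord_injective hv h).symm
  have hProw : γ.f P < β.f P := (X.rowWord_pos_iff P).1 hP
  have hQrow : γ.f Q < β.f Q := (X.rowWord_pos_iff Q).1 (hP.trans hPQx)
  have hσ := swap_apply_mem_iff (s := SkewCells β γ) (a := (P, γ.f P)) (b := (Q, γ.f Q))
    ⟨le_rfl, hProw⟩ ⟨le_rfl, hQrow⟩
  let Y := X.permute _ hσ
  have hY : Y.rowWord = X.rowWord ∘ swap P Q := X.rowWord_permute_swap hPQ.ne hσ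
  refine ⟨Y, (Y.isLRF_iff_isLatticeWord hrook).2 (hY ▸ hlat),
    (SkFilling.domLE_iff hv).2 (hY ▸ hdomY),
    ⟨_, _, ⟨le_rfl, hProw⟩, ⟨le_rfl, hQrow⟩, hPQ, hPQx, ?_⟩,
    hY ▸ sum_mul_comp_swap_lt hPQ (not_le.1 fun h => (hN Q h).not_gt hQrow) hPQx⟩
  rw [← comp_swap_eq_update, swap_comm]
  exact .refl

theorem leBox_of_domLE (hrook : RookStrip β γ) {X Z : SkFilling α β γ} (hX : IsLRF X)
    (hZ : IsLRF Z) (hdom : DomLE Z X) : LeBox Z X := by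
  obtain ⟨N, hN⟩ := exists_forall_ge_f_le_f β γ
  induction hw : ∑ i ∈ range N, i * X.rowWord i using Nat.strong_induction_on
    generalizing X with
  | _ n ih =>
    by_cases hZX : Z = X
    · exact hZX ▸ .refl
    obtain ⟨Y, hY, hZY, hXY, hlt⟩ := exists_boxMove_of_domLE hrook hX hZ hdom hZX hN
    exact (ih _ (hw ▸ hlt) hY hZY rfl).tail ⟨hY, hX, hXY⟩

end BoxOrder

theorem stmt13_general (α β γ : Partn) (hrook : RookStrip β γ)
    (X Z : SkFilling α β γ) (hX : IsLRF X) (hZ : IsLRF Z) :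
    ((DomLE Z X ∧ Z ≠ X) →
      ∃ Y : SkFilling α β γ, IsLRF Y ∧ DomLE Z Y ∧ BoxMove X Y) ∧
    (DomLE Z X → LeBox Z X) := by
  obtain ⟨N, hN⟩ := exists_forall_ge_f_le_f β γ
  refine ⟨fun ⟨hdom, hne⟩ => ?_, leBox_of_domLE hrook hX hZ⟩
  obtain ⟨Y, hY, hZY, hXY, -⟩ := exists_boxMove_of_domLE hrook hX hZ hdom hne hN
  exact ⟨Y, hY, hZY, hXY⟩

/-- for a rook strip, if `Z <_dom X` then a single decreasing box
move splits off: there is an LR-filling `Y` with `Z ≤_dom Y` and `Y` obtained from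
`X` by one box move; consequently `Z ≤_dom X` implies `Z ≤_box X`. -/
theorem stmt13 (α β γ : Partn) (hsub : PartnSub γ β) (hrook : RookStrip β γ)
    (X Z : SkFilling α β γ) (hX : IsLRF X) (hZ : IsLRF Z) :
    ((DomLE Z X ∧ Z ≠ X) →
      ∃ Y : SkFilling α β γ, IsLRF Y ∧ DomLE Z Y ∧ BoxMove X Y) ∧
    (DomLE Z X → LeBox Z X) :=
  stmt13_general α β γ hrook X Z hX hZ
end

section
/- Let β∖γ be a rook strip. In the poset of LR-fillings of type (α, β, γ) under the box-move order ≤_box, there is exactly one maximal element, namely the LR-filling X whose reading word ω(X) (columns left to right, each read bottom to top) is weakly decreasing. -/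
open Equiv

section Aux
open Finset

variable {α β γ : Partn} {n : ℕ} {e : Fin n → ℕ × ℕ}

lemma rs_row_eq (hrook : RookStrip β γ) {i j j' : ℕ}
    (h : (i, j) ∈ SkewCells β γ) (h' : (i, j') ∈ SkewCells β γ) : j = j' := by
  obtain ⟨h1, h2⟩ := h; obtain ⟨h1', h2'⟩ := h'
  have hv := hrook.1 i
  simp only at *
  omega

lemma rs_col_eq (hsub : PartnSub γ β) (hrook : RookStrip β γ) {i i' j : ℕ}
    (h : (i, j) ∈ SkewCells β γ) (h' : (i', j) ∈ SkewCells β γ) : i = i' := by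
  by_contra hne
  obtain ⟨h1, h2⟩ := h; obtain ⟨h1', h2'⟩ := h'
  simp only at h1 h2 h1' h2'
  obtain ⟨N, hN⟩ := β.finite_supp
  have hAfin : {x | j < β.f x}.Finite := by
    apply Set.Finite.subset (Finset.range N : Finset ℕ).finite_toSet
    intro x hx
    simp only [Set.mem_setOf_eq] at hx
    simp only [coe_range, Set.mem_Iio]
    by_contra hxN
    have := hN x (le_of_not_gt hxN); omega
  have hBsub : {x | j < γ.f x} ⊆ {x | j < β.f x} := fun x hx => lt_of_lt_of_le hx (hsub x)
  have hBfin := hAfin.subset hBsub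
  have hiB : i ∉ {x | j < γ.f x} := by simp only [Set.mem_setOf_eq]; omega
  have hi'B : i' ∉ {x | j < γ.f x} := by simp only [Set.mem_setOf_eq]; omega
  have hc1 : (insert i' {x | j < γ.f x}).ncard = {x | j < γ.f x}.ncard + 1 :=
    Set.ncard_insert_of_notMem hi'B hBfin
  have hiB2 : i ∉ insert i' {x | j < γ.f x} := by
    simp only [Set.mem_insert_iff]; push_neg; exact ⟨hne, hiB⟩
  have hc2 : (insert i (insert i' {x | j < γ.f x})).ncard
      = (insert i' {x | j < γ.f x}).ncard + 1 :=
    Set.ncard_insert_of_notMem hiB2 (hBfin.insert i')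
  have hsub2 : insert i (insert i' {x | j < γ.f x}) ⊆ {x | j < β.f x} := by
    intro x hx
    rcases hx with rfl | hx
    · exact h2
    rcases hx with rfl | hx
    · exact h2'
    · exact hBsub hx
  have hle := Set.ncard_le_ncard hsub2 hAfin
  have hh := hrook.2 j
  unfold ptranspose at hh
  omega

lemma rs_rowlt (hsub : PartnSub γ β) (hrook : RookStrip β γ) {p q : ℕ × ℕ}
    (hp : p ∈ SkewCells β γ) (hq : q ∈ SkewCells β γ) (h : p.1 < q.1) : q.2 < p.2 := by
  obtain ⟨hp1, hp2⟩ := hp; obtain ⟨hq1, hq2⟩ := hq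
  have hβ := β.antitone' (le_of_lt h)
  have hv := hrook.1 p.1
  have hle : q.2 ≤ p.2 := by omega
  rcases lt_or_eq_of_le hle with h' | h'
  · exact h'
  · exfalso
    have : p.1 = q.1 := by
      apply rs_col_eq hsub hrook (j := p.2) (by exact ⟨hp1, hp2⟩)
      exact ⟨by rw [← h']; exact hq1, by rw [← h']; exact hq2⟩
    omega

lemma e_col_strict (hsub : PartnSub γ β) (hrook : RookStrip β γ) (he : IsColRead β γ e)
    {k l : Fin n} (h : k < l) : (e k).2 < (e l).2 := by
  rcases he.2.2.2 k l h with h' | ⟨hc, _⟩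
  · exact h'
  · exfalso
    have hi : (e k).1 = (e l).1 := by
      apply rs_col_eq hsub hrook (j := (e k).2) (by simpa using he.1 k)
      rw [hc]; simpa using he.1 l
    have : e k = e l := Prod.ext hi hc
    exact absurd (he.2.1 this) (ne_of_lt h)

lemma e_row_anti (hsub : PartnSub γ β) (hrook : RookStrip β γ) (he : IsColRead β γ e)
    {k l : Fin n} (h : k < l) : (e l).1 < (e k).1 := by
  rcases lt_trichotomy ((e k).1) ((e l).1) with h' | h' | h'
  · exfalso
    have := rs_rowlt hsub hrook (he.1 k) (he.1 l) h'
    exact absurd (e_col_strict hsub hrook he h) (by omega)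
  · exfalso
    have hc : (e k).2 = (e l).2 := by
      apply rs_row_eq hrook (i := (e k).1) (by simpa using he.1 k)
      rw [h']; simpa using he.1 l
    have : e k = e l := Prod.ext h' hc
    exact absurd (he.2.1 this) (ne_of_lt h)
  · exact h'

lemma ncard_cells_eq (he : IsColRead β γ e) (P : ℕ × ℕ → Prop)
    [DecidablePred fun k : Fin n => P (e k)] :
    Set.ncard {c ∈ SkewCells β γ | P c} = (univ.filter (fun k : Fin n => P (e k))).card := by
  have himg : {c ∈ SkewCells β γ | P c} = e '' {k | P (e k)} := by
    ext c
    constructor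
    · rintro ⟨hc, hP⟩
      obtain ⟨k, rfl⟩ := he.2.2.1 c hc
      exact ⟨k, hP, rfl⟩
    · rintro ⟨k, hP, rfl⟩
      exact ⟨he.1 k, hP⟩
  rw [himg, Set.ncard_image_of_injective _ he.2.1, ← Set.ncard_coe_finset]
  congr 1
  ext k
  simp

end Aux
section Words
open Finset

variable {n : ℕ}

/-- Number of positions `k ≥ m` whose letter is `u`. -/
def SuffCnt (w : Fin n → ℕ) (m u : ℕ) : ℕ :=
  (univ.filter (fun k : Fin n => m ≤ (k : ℕ) ∧ w k = u)).card

/-- The suffix lattice condition for words. -/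
def LatticeW (w : Fin n → ℕ) : Prop :=
  ∀ u m : ℕ, 2 ≤ u → SuffCnt w m u ≤ SuffCnt w m (u - 1)

def Cnt (w : Fin n → ℕ) (u : ℕ) : ℕ := (univ.filter (fun k : Fin n => w k = u)).card

def CntGe (w : Fin n → ℕ) (u : ℕ) : ℕ := (univ.filter (fun k : Fin n => u ≤ w k)).card

lemma suffCnt_succ (v : Fin n → ℕ) (m : ℕ) (hm : m < n) (u : ℕ) :
    SuffCnt v m u = SuffCnt v (m + 1) u + (if v ⟨m, hm⟩ = u then 1 else 0) := by
  unfold SuffCnt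
  split_ifs with h
  · have hins : (univ.filter fun k : Fin n => m ≤ (k : ℕ) ∧ v k = u)
        = insert ⟨m, hm⟩ (univ.filter fun k : Fin n => m + 1 ≤ (k : ℕ) ∧ v k = u) := by
      ext k
      simp only [mem_insert, mem_filter, mem_univ, true_and]
      constructor
      · rintro ⟨h1, h2⟩
        rcases eq_or_lt_of_le h1 with h3 | h3
        · exact Or.inl (Fin.ext h3.symm)
        · exact Or.inr ⟨h3, h2⟩
      · rintro (rfl | ⟨h1, h2⟩)
        · exact ⟨le_refl _, h⟩
        · exact ⟨by omega, h2⟩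
    rw [hins, card_insert_of_notMem (by simp)]
  · have hfe : (univ.filter fun k : Fin n => m ≤ (k : ℕ) ∧ v k = u)
        = (univ.filter fun k : Fin n => m + 1 ≤ (k : ℕ) ∧ v k = u) := by
      apply filter_congr
      intro k _
      constructor
      · rintro ⟨h1, h2⟩
        rcases eq_or_lt_of_le h1 with h3 | h3
        · exact absurd h2 (by rw [show k = (⟨m, hm⟩ : Fin n) from Fin.ext h3.symm]; exact h)
        · exact ⟨h3, h2⟩
      · rintro ⟨h1, h2⟩
        exact ⟨by omega, h2⟩
    rw [hfe]; omega

lemma suffCnt_swap_low (w : Fin n → ℕ) (k₀ k₁ : Fin n) (m u : ℕ)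
    (h0 : m ≤ (k₀ : ℕ)) (h1 : m ≤ (k₁ : ℕ)) :
    SuffCnt (w ∘ Equiv.swap k₀ k₁) m u = SuffCnt w m u := by
  unfold SuffCnt
  have hmem : ∀ k : Fin n, m ≤ (k : ℕ) → m ≤ ((Equiv.swap k₀ k₁ k : Fin n) : ℕ) := by
    intro k hk
    rcases eq_or_ne k k₀ with rfl | hk0
    · rw [Equiv.swap_apply_left]; exact h1
    rcases eq_or_ne k k₁ with rfl | hk1
    · rw [Equiv.swap_apply_right]; exact h0
    · rw [Equiv.swap_apply_of_ne_of_ne hk0 hk1]; exact hk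
  apply Finset.card_bij (fun k _ => Equiv.swap k₀ k₁ k)
  · intro k hk
    simp only [mem_filter, mem_univ, true_and, Function.comp_apply] at hk ⊢
    exact ⟨hmem k hk.1, hk.2⟩
  · intro a _ b _ hab
    exact (Equiv.swap k₀ k₁).injective hab
  · intro b hb
    simp only [mem_filter, mem_univ, true_and] at hb
    refine ⟨Equiv.swap k₀ k₁ b, ?_, Equiv.swap_apply_self _ _ _⟩
    simp only [mem_filter, mem_univ, true_and, Function.comp_apply, Equiv.swap_apply_self]
    exact ⟨hmem b hb.1, hb.2⟩

lemma suffCnt_swap_high (w : Fin n → ℕ) (k₀ k₁ : Fin n) (m u : ℕ)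
    (h0 : (k₀ : ℕ) < m) (h1 : (k₁ : ℕ) < m) :
    SuffCnt (w ∘ Equiv.swap k₀ k₁) m u = SuffCnt w m u := by
  unfold SuffCnt
  congr 1
  apply filter_congr
  intro k _
  constructor
  · rintro ⟨hm, hw⟩
    refine ⟨hm, ?_⟩
    rwa [Function.comp_apply,
      Equiv.swap_apply_of_ne_of_ne (fun h => by subst h; omega) (fun h => by subst h; omega)] at hw
  · rintro ⟨hm, hw⟩
    refine ⟨hm, ?_⟩
    rwa [Function.comp_apply,
      Equiv.swap_apply_of_ne_of_ne (fun h => by subst h; omega) (fun h => by subst h; omega)]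

/-- Swapping an adjacent ascent preserves the lattice condition. -/
lemma lattice_swap (w : Fin n → ℕ) (k₀ k₁ : Fin n) (hadj : (k₀ : ℕ) + 1 = (k₁ : ℕ))
    (hw : w k₀ < w k₁) (hl : LatticeW w) : LatticeW (w ∘ Equiv.swap k₀ k₁) := by
  intro u m hu
  by_cases hlow : m ≤ (k₀ : ℕ)
  · rw [suffCnt_swap_low w k₀ k₁ m u hlow (by omega),
      suffCnt_swap_low w k₀ k₁ m (u - 1) hlow (by omega)]
    exact hl u m hu
  by_cases hhigh : (k₁ : ℕ) < m
  · rw [suffCnt_swap_high w k₀ k₁ m u (by omega) hhigh,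
      suffCnt_swap_high w k₀ k₁ m (u - 1) (by omega) hhigh]
    exact hl u m hu
  · -- m = k₁
    have hm : m = (k₁ : ℕ) := by omega
    subst hm
    have hn1 : (k₁ : ℕ) < n := k₁.isLt
    have hn0 : (k₀ : ℕ) < n := k₀.isLt
    have hk01 : k₀ ≠ k₁ := fun h => by rw [h] at hadj; omega
    have hfin0 : (⟨(k₀ : ℕ), hn0⟩ : Fin n) = k₀ := Fin.ext rfl
    have hfin1 : (⟨(k₁ : ℕ), hn1⟩ : Fin n) = k₁ := Fin.ext rfl
    have hswap1 : (w ∘ Equiv.swap k₀ k₁) k₁ = w k₀ := by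
      simp [Equiv.swap_apply_right]
    -- peel identities at x = u and x = u - 1
    have p1 : ∀ x, SuffCnt w (k₁ : ℕ) x
        = SuffCnt w ((k₁ : ℕ) + 1) x + (if w k₁ = x then 1 else 0) := by
      intro x; rw [suffCnt_succ w (k₁ : ℕ) hn1 x, hfin1]
    have p0 : ∀ x, SuffCnt w (k₀ : ℕ) x
        = SuffCnt w (k₁ : ℕ) x + (if w k₀ = x then 1 else 0) := by
      intro x; rw [suffCnt_succ w (k₀ : ℕ) hn0 x, hfin0, hadj]
    have p1' : ∀ x, SuffCnt (w ∘ Equiv.swap k₀ k₁) (k₁ : ℕ) x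
        = SuffCnt w ((k₁ : ℕ) + 1) x + (if w k₀ = x then 1 else 0) := by
      intro x
      rw [suffCnt_succ (w ∘ Equiv.swap k₀ k₁) (k₁ : ℕ) hn1 x, hfin1, hswap1,
        suffCnt_swap_high w k₀ k₁ ((k₁ : ℕ) + 1) x (by omega) (by omega)]
    have hA := hl u ((k₁ : ℕ) + 1) hu
    have hB := hl u (k₀ : ℕ) hu
    rw [p0 u, p0 (u - 1), p1 u, p1 (u - 1)] at hB
    rw [p1' u, p1' (u - 1)]
    have hcb : w k₀ < w k₁ := hw
    split_ifs at * <;> omega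

lemma cntGe_succ (w : Fin n → ℕ) (u : ℕ) : CntGe w u = Cnt w u + CntGe w (u + 1) := by
  unfold CntGe Cnt
  have hsp : (univ.filter fun k : Fin n => u ≤ w k)
      = (univ.filter fun k : Fin n => w k = u) ∪ (univ.filter fun k : Fin n => u + 1 ≤ w k) := by
    ext k; simp only [mem_filter, mem_univ, true_and, mem_union]; omega
  rw [hsp, card_union_of_disjoint]
  rw [Finset.disjoint_left]
  intro k hk hk'
  simp only [mem_filter, mem_univ, true_and] at hk hk'
  omega

lemma down_iff (h : Fin n → ℕ) (hh : ∀ k l : Fin n, k ≤ l → h l ≤ h k) (u : ℕ) (k : Fin n) :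
    u ≤ h k ↔ (k : ℕ) < CntGe h u := by
  constructor
  · intro hk
    have hsub : Finset.Iic k ⊆ univ.filter (fun l : Fin n => u ≤ h l) := by
      intro l hl
      simp only [Finset.mem_Iic] at hl
      simp only [mem_filter, mem_univ, true_and]
      exact le_trans hk (hh l k hl)
    have hc := Finset.card_le_card hsub
    rw [Fin.card_Iic] at hc
    unfold CntGe; omega
  · intro hk
    by_contra hc
    push_neg at hc
    have hsub : univ.filter (fun l : Fin n => u ≤ h l) ⊆ Finset.Iio k := by
      intro l hl
      simp only [mem_filter, mem_univ, true_and] at hl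
      simp only [Finset.mem_Iio]
      by_contra hkl
      push_neg at hkl
      exact absurd (le_trans hl (hh k l hkl)) (by omega)
    have hc2 := Finset.card_le_card hsub
    rw [Fin.card_Iio] at hc2
    unfold CntGe at hk; omega

lemma word_eq_of_counts (f g : Fin n → ℕ)
    (hf : ∀ k l : Fin n, k ≤ l → f l ≤ f k) (hg : ∀ k l : Fin n, k ≤ l → g l ≤ g k)
    (hcnt : ∀ u, Cnt f u = Cnt g u) : f = g := by
  set B : ℕ := (∑ k : Fin n, f k) + (∑ k : Fin n, g k) + 1 with hB
  have hfB : ∀ k, f k < B := by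
    intro k
    have h1 : f k ≤ ∑ k : Fin n, f k :=
      Finset.single_le_sum (fun i _ => Nat.zero_le _) (mem_univ k)
    omega
  have hgB : ∀ k, g k < B := by
    intro k
    have h1 : g k ≤ ∑ k : Fin n, g k :=
      Finset.single_le_sum (fun i _ => Nat.zero_le _) (mem_univ k)
    omega
  have hGe : ∀ d u, B ≤ u + d → CntGe f u = CntGe g u := by
    intro d
    induction d with
    | zero =>
      intro u hu
      have h1 : ∀ (h : Fin n → ℕ), (∀ k, h k < B) → CntGe h u = 0 := by
        intro h hhB
        unfold CntGe
        rw [Finset.card_eq_zero, Finset.filter_eq_empty_iff]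
        intro k _
        have := hhB k; omega
      rw [h1 f hfB, h1 g hgB]
    | succ d ih =>
      intro u hu
      by_cases hBu : B ≤ u
      · have h1 : ∀ (h : Fin n → ℕ), (∀ k, h k < B) → CntGe h u = 0 := by
          intro h hhB
          unfold CntGe
          rw [Finset.card_eq_zero, Finset.filter_eq_empty_iff]
          intro k _
          have := hhB k; omega
        rw [h1 f hfB, h1 g hgB]
      · rw [cntGe_succ f u, cntGe_succ g u, hcnt u, ih (u + 1) (by omega)]
  funext k
  have key : ∀ u, u ≤ f k ↔ u ≤ g k := by
    intro u
    rw [down_iff f hf u k, down_iff g hg u k, hGe B u (by omega)]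
  exact le_antisymm ((key (f k)).1 le_rfl) ((key (g k)).2 le_rfl)

lemma adj_inv (w : Fin n → ℕ) (h : ¬ ∀ k l : Fin n, k ≤ l → w l ≤ w k) :
    ∃ k₀ k₁ : Fin n, (k₀ : ℕ) + 1 = (k₁ : ℕ) ∧ w k₀ < w k₁ := by
  by_contra hc
  push_neg at hc
  apply h
  intro k l hkl
  have key : ∀ d (k l : Fin n), (l : ℕ) = (k : ℕ) + d → w l ≤ w k := by
    intro d
    induction d with
    | zero =>
      intro k l hd
      rw [show l = k from Fin.ext (by omega)]
    | succ d ih =>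
      intro k l hd
      have hk1 : (k : ℕ) + 1 < n := by have := l.isLt; omega
      exact le_trans (ih ⟨(k : ℕ) + 1, hk1⟩ l (by simp; omega)) (hc k ⟨(k : ℕ) + 1, hk1⟩ rfl)
  exact key ((l : ℕ) - (k : ℕ)) k l (by have : (k : ℕ) ≤ (l : ℕ) := hkl; omega)

end Words
section Bridge
open Finset

variable {α β γ : Partn} {n : ℕ} {e : Fin n → ℕ × ℕ}

/-- The reading word of a filling. -/
def wrd (e : Fin n → ℕ × ℕ) (X : SkFilling α β γ) : Fin n → ℕ := fun k => X.entry (e k)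

lemma lrf_latticeW (hsub : PartnSub γ β) (hrook : RookStrip β γ) (he : IsColRead β γ e)
    (X : SkFilling α β γ) (hX : IsLRF X) : LatticeW (wrd e X) := by
  intro u m hu
  by_cases hmn : m < n
  · set c := (e ⟨m, hmn⟩).2 with hc
    have key : ∀ k : Fin n, (c ≤ (e k).2 ↔ m ≤ (k : ℕ)) := by
      intro k
      constructor
      · intro h
        by_contra hk
        push_neg at hk
        have hlt : k < (⟨m, hmn⟩ : Fin n) := by exact hk
        have := e_col_strict hsub hrook he hlt
        omega
      · intro h
        rcases eq_or_lt_of_le h with h' | h'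
        · rw [show k = (⟨m, hmn⟩ : Fin n) from Fin.ext h'.symm]
        · have hlt : (⟨m, hmn⟩ : Fin n) < k := h'
          exact le_of_lt (e_col_strict hsub hrook he hlt)
    have hlr := hX.2.2 u c hu
    have h1 : Set.ncard {p ∈ SkewCells β γ | c ≤ p.2 ∧ X.entry p = u}
        = (univ.filter (fun k : Fin n => c ≤ (e k).2 ∧ X.entry (e k) = u)).card :=
      ncard_cells_eq he (fun p => c ≤ p.2 ∧ X.entry p = u)
    have h2 : Set.ncard {p ∈ SkewCells β γ | c ≤ p.2 ∧ X.entry p = u - 1}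
        = (univ.filter (fun k : Fin n => c ≤ (e k).2 ∧ X.entry (e k) = u - 1)).card :=
      ncard_cells_eq he (fun p => c ≤ p.2 ∧ X.entry p = u - 1)
    rw [h1, h2] at hlr
    have hf : ∀ v, (univ.filter (fun k : Fin n => c ≤ (e k).2 ∧ X.entry (e k) = v))
        = (univ.filter (fun k : Fin n => m ≤ (k : ℕ) ∧ wrd e X k = v)) := by
      intro v
      apply filter_congr
      intro k _
      rw [key k]; rfl
    rw [hf u, hf (u - 1)] at hlr
    exact hlr
  · have hz : ∀ v, SuffCnt (wrd e X) m v = 0 := by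
      intro v
      unfold SuffCnt
      rw [Finset.card_eq_zero, Finset.filter_eq_empty_iff]
      intro k _
      have := k.isLt
      push_neg
      intro hm
      omega
    rw [hz u, hz (u - 1)]

lemma latticeW_lrf (hsub : PartnSub γ β) (hrook : RookStrip β γ) (he : IsColRead β γ e)
    (F : SkFilling α β γ) (hlat : LatticeW (wrd e F)) : IsLRF F := by
  refine ⟨?_, ?_, ?_⟩
  · intro i j j' h h' _
    rw [rs_row_eq hrook h h']
  · intro i i' j h h' hii
    exact absurd (rs_col_eq hsub hrook h h') (ne_of_lt hii)
  · intro u c hu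
    have h1 : Set.ncard {p ∈ SkewCells β γ | c ≤ p.2 ∧ F.entry p = u}
        = (univ.filter (fun k : Fin n => c ≤ (e k).2 ∧ F.entry (e k) = u)).card :=
      ncard_cells_eq he (fun p => c ≤ p.2 ∧ F.entry p = u)
    have h2 : Set.ncard {p ∈ SkewCells β γ | c ≤ p.2 ∧ F.entry p = u - 1}
        = (univ.filter (fun k : Fin n => c ≤ (e k).2 ∧ F.entry (e k) = u - 1)).card :=
      ncard_cells_eq he (fun p => c ≤ p.2 ∧ F.entry p = u - 1)
    rw [h1, h2]
    by_cases hS : ∃ k : Fin n, c ≤ (e k).2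
    · obtain ⟨ka, hka⟩ := hS
      have hSne : (univ.filter (fun k : Fin n => c ≤ (e k).2)).Nonempty :=
        ⟨ka, by simp [hka]⟩
      set m := (univ.filter (fun k : Fin n => c ≤ (e k).2)).min' hSne with hm
      have key : ∀ k : Fin n, (c ≤ (e k).2 ↔ (m : ℕ) ≤ (k : ℕ)) := by
        intro k
        constructor
        · intro h
          exact Finset.min'_le _ k (by simp [h])
        · intro h
          have h1 : c ≤ (e m).2 := by
            have := Finset.min'_mem _ hSne
            simpa using this
          rcases eq_or_lt_of_le (show m ≤ k from h) with h' | h'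
          · rw [← h']; exact h1
          · exact le_trans h1 (le_of_lt (e_col_strict hsub hrook he h'))
      have hf : ∀ v, (univ.filter (fun k : Fin n => c ≤ (e k).2 ∧ F.entry (e k) = v))
          = (univ.filter (fun k : Fin n => (m : ℕ) ≤ (k : ℕ) ∧ wrd e F k = v)) := by
        intro v
        apply filter_congr
        intro k _
        rw [key k]; rfl
      rw [hf u, hf (u - 1)]
      exact hlat u (m : ℕ) hu
    · push_neg at hS
      have hz : ∀ v, (univ.filter (fun k : Fin n => c ≤ (e k).2 ∧ F.entry (e k) = v)) = ∅ := by
        intro v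
        rw [Finset.filter_eq_empty_iff]
        intro k _
        push_neg
        intro hck
        exact absurd hck (not_le_of_gt (hS k))
      rw [hz u, hz (u - 1)]

lemma swap_mem_cells {p q c : ℕ × ℕ} (hp : p ∈ SkewCells β γ) (hq : q ∈ SkewCells β γ)
    (hc : c ∈ SkewCells β γ) : Equiv.swap p q c ∈ SkewCells β γ := by
  rcases eq_or_ne c p with rfl | hcp
  · rw [Equiv.swap_apply_left]; exact hq
  rcases eq_or_ne c q with rfl | hcq
  · rw [Equiv.swap_apply_right]; exact hp
  · rw [Equiv.swap_apply_of_ne_of_ne hcp hcq]; exact hc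

/-- The filling obtained by exchanging the entries of two boxes. -/
def swapFill (X : SkFilling α β γ) (p q : ℕ × ℕ) (hp : p ∈ SkewCells β γ)
    (hq : q ∈ SkewCells β γ) : SkFilling α β γ where
  entry := X.entry ∘ Equiv.swap p q
  zero_outside := by
    intro c hc
    have hcp : c ≠ p := fun h => hc (h ▸ hp)
    have hcq : c ≠ q := fun h => hc (h ▸ hq)
    rw [Function.comp_apply, Equiv.swap_apply_of_ne_of_ne hcp hcq]
    exact X.zero_outside c hc
  pos_inside := by
    intro c hc
    exact X.pos_inside _ (swap_mem_cells hp hq hc)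
  content := by
    intro u hu
    rw [← X.content u hu]
    have himg : {c ∈ SkewCells β γ | (X.entry ∘ Equiv.swap p q) c = u}
        = (Equiv.swap p q) '' {c ∈ SkewCells β γ | X.entry c = u} := by
      ext c
      simp only [Set.mem_image, Set.mem_setOf_eq, Function.comp_apply]
      constructor
      · rintro ⟨hc, hval⟩
        exact ⟨Equiv.swap p q c, ⟨swap_mem_cells hp hq hc, hval⟩, Equiv.swap_apply_self _ _ _⟩
      · rintro ⟨d, ⟨hd, hval⟩, rfl⟩
        refine ⟨swap_mem_cells hp hq hd, ?_⟩
        rw [Equiv.swap_apply_self]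
        exact hval
    rw [himg, Set.ncard_image_of_injective _ (Equiv.swap p q).injective]

lemma cnt_wrd (he : IsColRead β γ e) (X : SkFilling α β γ) (u : ℕ) (hu : 1 ≤ u) :
    Cnt (wrd e X) u = α.f (u - 1) := by
  rw [← X.content u hu]
  exact (ncard_cells_eq he (fun c => X.entry c = u)).symm

end Bridge
section Steps
open Finset

variable {α β γ : Partn} {n : ℕ} {e : Fin n → ℕ × ℕ}

lemma skFilling_ext {X Y : SkFilling α β γ} (h : X.entry = Y.entry) : X = Y := by
  cases X; cases Y; cases h; rfl

lemma sortswap_empty (hsub : PartnSub γ β) (hrook : RookStrip β γ) {f g : ℕ × ℕ → ℕ}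
    (h : Relation.ReflTransGen (SortSwap β γ) f g) : f = g := by
  induction h with
  | refl => rfl
  | tail _ hstep ih =>
    exfalso
    obtain ⟨p, q, hp, hq, hor, _, _⟩ := hstep
    rcases hor with ⟨hr, hc⟩ | ⟨hc, hr⟩
    · have : p.2 = q.2 := by
        apply rs_row_eq hrook (i := p.1) (by simpa using hp)
        rw [hr]; simpa using hq
      omega
    · have : p.1 = q.1 := by
        apply rs_col_eq hsub hrook (j := p.2) (by simpa using hp)
        rw [hc]; simpa using hq
      omega

/-- Given an adjacent ascent in the reading word of an LR-filling, produce the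
filling obtained by the corresponding decreasing box move. -/
lemma step_lemma (hsub : PartnSub γ β) (hrook : RookStrip β γ) (he : IsColRead β γ e)
    (X : SkFilling α β γ) (hX : IsLRF X) {k₀ k₁ : Fin n}
    (hadj : (k₀ : ℕ) + 1 = (k₁ : ℕ)) (hinv : X.entry (e k₀) < X.entry (e k₁)) :
    ∃ a : SkFilling α β γ, IsLRF a ∧ BoxMove a X ∧
      (∀ k, a.entry (e k) = X.entry (e (Equiv.swap k₀ k₁ k))) := by
  have hk01 : k₀ < k₁ := by omega
  set p := e k₁ with hpdef
  set q := e k₀ with hqdef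
  have hp := he.1 k₁
  have hq := he.1 k₀
  have hpq : p ≠ q := fun h => absurd (he.2.1 h) (by omega)
  have hrow : p.1 < q.1 := e_row_anti hsub hrook he hk01
  refine ⟨swapFill X p q hp hq, ?_, ?_, ?_⟩
  case _ =>
    -- IsLRF
    apply latticeW_lrf hsub hrook he
    have hword : wrd e (swapFill X p q hp hq) = (wrd e X) ∘ Equiv.swap k₀ k₁ := by
      funext k
      show X.entry (Equiv.swap p q (e k)) = X.entry (e (Equiv.swap k₀ k₁ k))
      rcases eq_or_ne k k₀ with rfl | hk0
      · rw [Equiv.swap_apply_left, ← hqdef, Equiv.swap_apply_right]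
      rcases eq_or_ne k k₁ with rfl | hk1
      · rw [Equiv.swap_apply_right, ← hpdef, Equiv.swap_apply_left]
      · rw [Equiv.swap_apply_of_ne_of_ne (fun h => hk1 (he.2.1 h)) (fun h => hk0 (he.2.1 h)),
          Equiv.swap_apply_of_ne_of_ne hk0 hk1]
    rw [hword]
    exact lattice_swap (wrd e X) k₀ k₁ hadj hinv (lrf_latticeW hsub hrook he X hX)
  case _ =>
    -- BoxMove
    refine ⟨p, q, hp, hq, hrow, ?_, ?_⟩
    · show X.entry (Equiv.swap p q p) < X.entry (Equiv.swap p q q)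
      rw [Equiv.swap_apply_left, Equiv.swap_apply_right]
      exact hinv
    · have hupd : Function.update (Function.update (X.entry ∘ Equiv.swap p q) p
          ((X.entry ∘ Equiv.swap p q) q)) q ((X.entry ∘ Equiv.swap p q) p) = X.entry := by
        funext c
        rcases eq_or_ne c q with rfl | hcq
        · rw [Function.update_self, Function.comp_apply, Equiv.swap_apply_left]
        rcases eq_or_ne c p with rfl | hcp
        · rw [Function.update_of_ne hcq, Function.update_self, Function.comp_apply,
            Equiv.swap_apply_right]
        · rw [Function.update_of_ne hcq, Function.update_of_ne hcp, Function.comp_apply,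
            Equiv.swap_apply_of_ne_of_ne hcp hcq]
      show Relation.ReflTransGen (SortSwap β γ) _ X.entry
      rw [show (swapFill X p q hp hq).entry = X.entry ∘ Equiv.swap p q from rfl, hupd]

  case _ =>
    -- word identity
    intro k
    show X.entry (Equiv.swap p q (e k)) = X.entry (e (Equiv.swap k₀ k₁ k))
    rcases eq_or_ne k k₀ with rfl | hk0
    · rw [Equiv.swap_apply_left, ← hqdef, Equiv.swap_apply_right]
    rcases eq_or_ne k k₁ with rfl | hk1
    · rw [Equiv.swap_apply_right, ← hpdef, Equiv.swap_apply_left]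
    · rw [Equiv.swap_apply_of_ne_of_ne (fun h => hk1 (he.2.1 h)) (fun h => hk0 (he.2.1 h)),
        Equiv.swap_apply_of_ne_of_ne hk0 hk1]

/-- The weighted measure of a filling. -/
def Msr (e : Fin n → ℕ × ℕ) (X : SkFilling α β γ) : ℕ := ∑ k : Fin n, (k : ℕ) * X.entry (e k)

lemma msr_lt {X a : SkFilling α β γ} {k₀ k₁ : Fin n}
    (hadj : (k₀ : ℕ) + 1 = (k₁ : ℕ)) (hinv : X.entry (e k₀) < X.entry (e k₁))
    (hword : ∀ k, a.entry (e k) = X.entry (e (Equiv.swap k₀ k₁ k))) :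
    Msr e a < Msr e X := by
  have hk01 : k₀ ≠ k₁ := fun h => by rw [h] at hadj; omega
  have h1 : Msr e a = ∑ k : Fin n, (k : ℕ) * X.entry (e (Equiv.swap k₀ k₁ k)) :=
    Finset.sum_congr rfl (fun k _ => by rw [hword k])
  have h2 : ∑ k : Fin n, (k : ℕ) * X.entry (e (Equiv.swap k₀ k₁ k))
      = ∑ k : Fin n, ((Equiv.swap k₀ k₁ k : Fin n) : ℕ) * X.entry (e k) := by
    rw [← Equiv.sum_comp (Equiv.swap k₀ k₁)
      (fun k => ((Equiv.swap k₀ k₁ k : Fin n) : ℕ) * X.entry (e k))]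
    apply Finset.sum_congr rfl
    intro k _
    rw [Equiv.swap_apply_self]
  have split : ∀ F : Fin n → ℕ, ∑ k : Fin n, F k
      = F k₀ + (F k₁ + ∑ k ∈ (univ.erase k₀).erase k₁, F k) := by
    intro F
    rw [Finset.add_sum_erase _ F (Finset.mem_erase.2 ⟨(by omega : k₁ ≠ k₀), mem_univ k₁⟩),
      Finset.add_sum_erase _ F (mem_univ k₀)]
  have hXs : Msr e X = (fun k : Fin n => (k : ℕ) * X.entry (e k)) k₀
      + ((fun k : Fin n => (k : ℕ) * X.entry (e k)) k₁
      + ∑ k ∈ (univ.erase k₀).erase k₁, (k : ℕ) * X.entry (e k)) :=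
    split (fun k : Fin n => (k : ℕ) * X.entry (e k))
  rw [h1, h2, hXs, split (fun k : Fin n => ((Equiv.swap k₀ k₁ k : Fin n) : ℕ) * X.entry (e k))]
  simp only
  have htail : ∑ k ∈ (univ.erase k₀).erase k₁, ((Equiv.swap k₀ k₁ k : Fin n) : ℕ) * X.entry (e k)
      = ∑ k ∈ (univ.erase k₀).erase k₁, (k : ℕ) * X.entry (e k) := by
    apply Finset.sum_congr rfl
    intro k hk
    simp only [Finset.mem_erase] at hk
    rw [Equiv.swap_apply_of_ne_of_ne hk.2.1 hk.1]
  rw [htail]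
  rw [Equiv.swap_apply_left, Equiv.swap_apply_right]
  have hb := hinv
  set b := X.entry (e k₀)
  set c := X.entry (e k₁)
  have hlt : (k₁ : ℕ) * b + (k₀ : ℕ) * c < (k₀ : ℕ) * b + (k₁ : ℕ) * c := by
    have h3 : (k₁ : ℕ) = (k₀ : ℕ) + 1 := by omega
    rw [h3]
    ring_nf
    omega
  omega

/-- Every LR filling ascends to one with weakly decreasing reading word. -/
lemma exists_dec (hsub : PartnSub γ β) (hrook : RookStrip β γ) (he : IsColRead β γ e) :
    ∀ N (X : SkFilling α β γ), IsLRF X → Msr e X ≤ N →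
    ∃ D : SkFilling α β γ, IsLRF D ∧ ∀ k l : Fin n, k ≤ l → D.entry (e l) ≤ D.entry (e k) := by
  intro N
  induction N with
  | zero =>
    intro X hX hM
    by_cases hdec : ∀ k l : Fin n, k ≤ l → X.entry (e l) ≤ X.entry (e k)
    · exact ⟨X, hX, hdec⟩
    · obtain ⟨k₀, k₁, hadj, hinv⟩ := adj_inv (wrd e X) hdec
      obtain ⟨a, _, _, hword⟩ := step_lemma hsub hrook he X hX hadj hinv
      have := msr_lt hadj hinv hword
      omega
  | succ N ih =>
    intro X hX hM
    by_cases hdec : ∀ k l : Fin n, k ≤ l → X.entry (e l) ≤ X.entry (e k)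
    · exact ⟨X, hX, hdec⟩
    · obtain ⟨k₀, k₁, hadj, hinv⟩ := adj_inv (wrd e X) hdec
      obtain ⟨a, ha, _, hword⟩ := step_lemma hsub hrook he X hX hadj hinv
      have := msr_lt hadj hinv hword
      exact ih a ha (by omega)

end Steps

/-- for a rook strip, the poset of LR-fillings under `≤_box` has
exactly one maximal element, namely the filling whose reading word is weakly
decreasing. -/
theorem stmt14 (n : ℕ) (α β γ : Partn) (hsub : PartnSub γ β) (hrook : RookStrip β γ)
    (e : Fin n → ℕ × ℕ) (he : IsColRead β γ e)
    (hne : ∃ F : SkFilling α β γ, IsLRF F) :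
    (∃! X : SkFilling α β γ, IsLRF X ∧ ∀ Y, IsLRF Y → LeBox X Y → X = Y) ∧
    ∀ X : SkFilling α β γ, IsLRF X →
      ((∀ Y, IsLRF Y → LeBox X Y → X = Y) ↔
        ∀ k l : Fin n, k ≤ l → X.entry (e l) ≤ X.entry (e k)) := by
  classical
  have dir1 : ∀ X : SkFilling α β γ, IsLRF X →
      (∀ k l : Fin n, k ≤ l → X.entry (e l) ≤ X.entry (e k)) →
      ∀ Y, IsLRF Y → LeBox X Y → X = Y := by
    intro X hX hdec Y hY hXY
    rcases Relation.ReflTransGen.cases_head hXY with heq | ⟨c, hstep, _⟩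
    · exact heq
    · exfalso
      obtain ⟨_, hc, p, q, hp, hq, hpq1, hval, hchain⟩ := hstep
      have hupd := sortswap_empty hsub hrook hchain
      have hpq : p ≠ q := fun h => by rw [h] at hpq1; omega
      have hXq : X.entry q = c.entry p := by
        rw [← hupd, Function.update_self]
      have hXp : X.entry p = c.entry q := by
        rw [← hupd, Function.update_of_ne hpq, Function.update_self]
      have hlt : X.entry q < X.entry p := by rw [hXq, hXp]; exact hval
      obtain ⟨k, hk⟩ := he.2.2.1 q hq
      obtain ⟨l, hl⟩ := he.2.2.1 p hp
      have hcol : q.2 < p.2 := rs_rowlt hsub hrook hp hq hpq1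
      have hkl : k < l := by
        rcases lt_trichotomy k l with h | h | h
        · exact h
        · exact absurd (show p = q by rw [← hl, ← hk, h]) hpq
        · exfalso
          have := e_col_strict hsub hrook he h
          rw [hk, hl] at this
          omega
      have := hdec k l (le_of_lt hkl)
      rw [hk, hl] at this
      omega
  have dir2 : ∀ X : SkFilling α β γ, IsLRF X →
      (∀ Y, IsLRF Y → LeBox X Y → X = Y) →
      ∀ k l : Fin n, k ≤ l → X.entry (e l) ≤ X.entry (e k) := by
    intro X hX hmax
    by_contra hdec
    obtain ⟨k₀, k₁, hadj, hinv⟩ := adj_inv (wrd e X) hdec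
    obtain ⟨a, ha, hbox, hword⟩ := step_lemma hsub hrook he X hX hadj hinv
    have hle : LeBox X a := Relation.ReflTransGen.single ⟨hX, ha, hbox⟩
    have hXa := hmax a ha hle
    have h1 : a.entry (e k₀) = X.entry (e k₁) := by rw [hword k₀, Equiv.swap_apply_left]
    rw [← hXa] at h1
    have hinv' : X.entry (e k₀) < X.entry (e k₁) := hinv
    omega
  obtain ⟨F, hF⟩ := hne
  obtain ⟨D, hD, hdecD⟩ := exists_dec hsub hrook he (Msr e F) F hF le_rfl
  constructor
  · refine ⟨D, ⟨hD, dir1 D hD hdecD⟩, ?_⟩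
    rintro Y ⟨hY, hmax⟩
    have hdecY := dir2 Y hY hmax
    apply skFilling_ext
    have hwrd : wrd e Y = wrd e D := by
      apply word_eq_of_counts (wrd e Y) (wrd e D) hdecY hdecD
      intro u
      match u with
      | 0 =>
        have hz : ∀ Z : SkFilling α β γ, Cnt (wrd e Z) 0 = 0 := by
          intro Z
          unfold Cnt
          rw [Finset.card_eq_zero, Finset.filter_eq_empty_iff]
          intro k _
          have := Z.pos_inside (e k) (he.1 k)
          unfold wrd
          omega
        rw [hz Y, hz D]
      | u + 1 =>
        rw [cnt_wrd he Y (u + 1) (by omega), cnt_wrd he D (u + 1) (by omega)]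
    funext c
    by_cases hc : c ∈ SkewCells β γ
    · obtain ⟨k, rfl⟩ := he.2.2.1 c hc
      exact congrFun hwrd k
    · rw [Y.zero_outside c hc, D.zero_outside c hc]
  · intro X hX
    exact ⟨dir2 X hX, dir1 X hX⟩
end
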